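/- arXiv:0803.3713 — 5 statements merged into one kernel-verified Lean document; each statement's English description precedes it below -/
import Mathlib

section
/- Let Y be a real inner product space, let v, g ∈ Y, and let r ≥ 0 be a real number. If ⟨v, g⟩ > r, then v ≠ 0 and the function φ : ℝ → ℝ defined by φ(α) = r·|α| + (1/2)‖α·v − g‖² has a unique global minimizer, given by α* = (⟨v, g⟩ − r)/‖v‖²; that is, φ(α*) ≤ φ(α) for all α ∈ ℝ, with equality only when α = α*. -/
/-!
On the half-line `α ≥ 0` the objective is the quadratic `½‖v‖²α² − (⟪v,g⟫ − r)α + ½‖g‖²`,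
whose vertex `α*` is positive because `⟪v,g⟫ > r`. Completing the square around `α*` gives
`φ(α) = φ(α*) + ½‖v‖²(α − α*)² + r(|α| − α)` for every real `α`, and both added terms are
nonnegative, the first one vanishing only at `α = α*`.
-/

open RealInnerProductSpace

/-- The objective `φ(α) = r·|α| + (1/2)‖α·v − g‖²` restricted to a line. -/
noncomputable def phi {Y : Type*} [NormedAddCommGroup Y] [InnerProductSpace ℝ Y]
    (r : ℝ) (v g : Y) (α : ℝ) : ℝ :=
  r * |α| + (1 / 2) * ‖α • v - g‖ ^ 2

section

variable {Y : Type*} [NormedAddCommGroup Y] [InnerProductSpace ℝ Y]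

theorem phi_eq_quadratic (r : ℝ) (v g : Y) (α : ℝ) :
    phi r v g α = r * |α| + (1 / 2) * (α ^ 2 * ‖v‖ ^ 2 - 2 * α * ⟪v, g⟫ + ‖g‖ ^ 2) := by
  rw [phi, norm_sub_sq_real, real_inner_smul_left, norm_smul, mul_pow, Real.norm_eq_abs, sq_abs]
  ring

theorem phi_eq_phi_add_sq_add {r : ℝ} {v g : Y} {a : ℝ} (ha : 0 ≤ a)
    (hvertex : ‖v‖ ^ 2 * a = ⟪v, g⟫ - r) (α : ℝ) :
    phi r v g α = phi r v g a + ‖v‖ ^ 2 / 2 * (α - a) ^ 2 + r * (|α| - α) := by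
  rw [phi_eq_quadratic, phi_eq_quadratic, abs_of_nonneg ha]
  linear_combination (α - a) * hvertex

theorem phi_lt_phi_of_ne {r : ℝ} (hr : 0 ≤ r) {v g : Y} (hv : v ≠ 0) {a : ℝ} (ha : 0 ≤ a)
    (hvertex : ‖v‖ ^ 2 * a = ⟪v, g⟫ - r) {α : ℝ} (hα : α ≠ a) :
    phi r v g a < phi r v g α := by
  have hsq : 0 < ‖v‖ ^ 2 / 2 * (α - a) ^ 2 := by
    have := sub_ne_zero.mpr hα
    positivity
  have habs : 0 ≤ r * (|α| - α) := mul_nonneg hr (sub_nonneg.mpr (le_abs_self α))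
  rw [phi_eq_phi_add_sq_add ha hvertex α]
  linarith

end

/-- First case of Lemma 1: if `⟪v,g⟫ > r ≥ 0`, then `v ≠ 0` and
`α* = (⟪v,g⟫ − r)/‖v‖²` is the unique global minimizer of `φ`. -/
theorem stmt0 {Y : Type*} [NormedAddCommGroup Y] [InnerProductSpace ℝ Y]
    (v g : Y) (r : ℝ) (hr : 0 ≤ r) (h : ⟪v, g⟫ > r) :
    v ≠ 0 ∧
      ∀ α : ℝ,
        phi r v g ((⟪v, g⟫ - r) / ‖v‖ ^ 2) ≤ phi r v g α ∧
        (phi r v g ((⟪v, g⟫ - r) / ‖v‖ ^ 2) = phi r v g α →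
          α = (⟪v, g⟫ - r) / ‖v‖ ^ 2) := by
  have hv : v ≠ 0 := by
    rintro rfl
    rw [inner_zero_left] at h
    linarith
  have hnorm : 0 < ‖v‖ ^ 2 := by positivity
  have ha : 0 ≤ (⟪v, g⟫ - r) / ‖v‖ ^ 2 := div_nonneg (by linarith) hnorm.le
  have hvertex : ‖v‖ ^ 2 * ((⟪v, g⟫ - r) / ‖v‖ ^ 2) = ⟪v, g⟫ - r :=
    mul_div_cancel₀ _ hnorm.ne'
  refine ⟨hv, fun α => ⟨?_, fun heq => ?_⟩⟩
  · rcases eq_or_ne α ((⟪v, g⟫ - r) / ‖v‖ ^ 2) with rfl | hα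
    · exact le_rfl
    · exact (phi_lt_phi_of_ne hr hv ha hvertex hα).le
  · by_contra hα
    exact (phi_lt_phi_of_ne hr hv ha hvertex hα).ne heq
end

section
/- Let Y be a real inner product space, let v, g ∈ Y, and let r ≥ 0 be a real number with v ≠ 0 or r > 0. If |⟨v, g⟩| ≤ r, then α = 0 is the unique global minimizer on ℝ of the function φ(α) = r·|α| + (1/2)‖α·v − g‖²; that is, φ(0) ≤ φ(α) for all α ∈ ℝ, with equality only when α = 0. -/
/-! Expanding the square, `φ(α) - φ(0) = (r|α| - α⟪v, g⟫) + α²‖v‖²/2`. The first term is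
nonnegative because `|⟪v, g⟫| ≤ r`, and the second is positive for `α ≠ 0` when `v ≠ 0`;
when `v = 0` the difference is `r|α|`, positive for `α ≠ 0` since then `r > 0`. -/

open RealInnerProductSpace

lemma mul_le_mul_abs_of_abs_le {a b r : ℝ} (h : |b| ≤ r) : a * b ≤ r * |a| :=
  calc a * b ≤ |a| * |b| := (le_abs_self _).trans_eq (abs_mul a b)
    _ ≤ |a| * r := by gcongr
    _ = r * |a| := mul_comm _ _

section

variable {Y : Type*} [NormedAddCommGroup Y] [InnerProductSpace ℝ Y]

lemma phi_sub_phi_zero (r : ℝ) (v g : Y) (α : ℝ) :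
    phi r v g α - phi r v g 0 = (r * |α| - α * ⟪v, g⟫) + α ^ 2 * ‖v‖ ^ 2 / 2 := by
  simp only [phi, norm_sub_sq_real, real_inner_smul_left, norm_smul, mul_pow, sq_abs,
    Real.norm_eq_abs, abs_zero, zero_smul, zero_sub, norm_neg]
  ring

lemma phi_zero_vec (r : ℝ) (g : Y) (α : ℝ) :
    phi r 0 g α = r * |α| + (1 / 2) * ‖g‖ ^ 2 := by
  simp [phi]

lemma sq_mul_norm_sq_le_phi_sub_phi_zero {r : ℝ} {v g : Y} (h : |⟪v, g⟫| ≤ r) (α : ℝ) :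
    α ^ 2 * ‖v‖ ^ 2 / 2 ≤ phi r v g α - phi r v g 0 := by
  rw [phi_sub_phi_zero]
  linarith [mul_le_mul_abs_of_abs_le (a := α) h]

end

theorem stmt1_general {Y : Type*} [NormedAddCommGroup Y] [InnerProductSpace ℝ Y]
    (v g : Y) (r : ℝ) (hvr : v ≠ 0 ∨ 0 < r) (h : |⟪v, g⟫| ≤ r) :
    ∀ α : ℝ, phi r v g 0 ≤ phi r v g α ∧ (phi r v g 0 = phi r v g α → α = 0) := by
  intro α
  have hgap := sq_mul_norm_sq_le_phi_sub_phi_zero h α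
  refine ⟨by linarith [show 0 ≤ α ^ 2 * ‖v‖ ^ 2 / 2 by positivity], fun heq => ?_⟩
  by_cases hv : v = 0
  · subst hv
    have hr : 0 < r := hvr.resolve_left (not_not.mpr rfl)
    have hrα : r * |α| = 0 := by
      rw [phi_zero_vec, phi_zero_vec, abs_zero, mul_zero] at heq
      linarith
    exact abs_eq_zero.mp ((mul_eq_zero.mp hrα).resolve_left hr.ne')
  · by_contra hα
    have : 0 < α ^ 2 * ‖v‖ ^ 2 / 2 := by
      have := norm_pos_iff.mpr hv
      positivity
    linarith

/-- Second case of Lemma 1: if `v ≠ 0` or `r > 0`, and `|⟪v,g⟫| ≤ r`, then `α = 0`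
is the unique global minimizer of `φ`. -/
theorem stmt1 {Y : Type*} [NormedAddCommGroup Y] [InnerProductSpace ℝ Y]
    (v g : Y) (r : ℝ) (hr : 0 ≤ r) (hvr : v ≠ 0 ∨ 0 < r) (h : |⟪v, g⟫| ≤ r) :
    ∀ α : ℝ, phi r v g 0 ≤ phi r v g α ∧ (phi r v g 0 = phi r v g α → α = 0) :=
  stmt1_general v g r hvr h
end

section
/- Let Y be a real inner product space, let v, g ∈ Y, and let r ≥ 0 be a real number. If ⟨v, g⟩ < −r, then v ≠ 0 and the function φ : ℝ → ℝ defined by φ(α) = r·|α| + (1/2)‖α·v − g‖² has a unique global minimizer, given by α* = (⟨v, g⟩ + r)/‖v‖²; that is, φ(α*) ≤ φ(α) for all α ∈ ℝ, with equality only when α = α*. -/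
/-!
Put `β = (⟪v, g⟫ + r) / ‖v‖²`, which is negative because `⟪v, g⟫ + r < 0`. Completing the square
in `‖α • v - g‖²` around `β` and using `|β| = -β` gives the exact identity
`φ(α) - φ(β) = ‖v‖² (α - β)² / 2 + r (|α| + α)`, whose two summands are nonnegative; the first one
vanishes only at `α = β`.
-/

open RealInnerProductSpace

section

variable {Y : Type*} [NormedAddCommGroup Y] [InnerProductSpace ℝ Y]

theorem norm_smul_sub_sq_real (α : ℝ) (v g : Y) :
    ‖α • v - g‖ ^ 2 = α ^ 2 * ‖v‖ ^ 2 - 2 * α * ⟪v, g⟫ + ‖g‖ ^ 2 := by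
  rw [norm_sub_sq_real, norm_smul, real_inner_smul_left, mul_pow, Real.norm_eq_abs, sq_abs]
  ring

theorem ne_zero_of_inner_lt_neg {v g : Y} {r : ℝ} (hr : 0 ≤ r) (h : ⟪v, g⟫ < -r) : v ≠ 0 := by
  rintro rfl
  rw [inner_zero_left] at h
  linarith

theorem phi_sub_phi_eq {r : ℝ} {v g : Y} {β : ℝ} (hβ : ‖v‖ ^ 2 * β = ⟪v, g⟫ + r)
    (hβ_nonpos : β ≤ 0) (α : ℝ) :
    phi r v g α - phi r v g β = ‖v‖ ^ 2 / 2 * (α - β) ^ 2 + r * (|α| + α) := by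
  rw [phi, phi, norm_smul_sub_sq_real, norm_smul_sub_sq_real, abs_of_nonpos hβ_nonpos]
  linear_combination (α - β) * hβ

end

/-- Third case of Lemma 1: if `⟪v,g⟫ < −r` with `r ≥ 0`, then `v ≠ 0` and
`α* = (⟪v,g⟫ + r)/‖v‖²` is the unique global minimizer of `φ`. -/
theorem stmt2 {Y : Type*} [NormedAddCommGroup Y] [InnerProductSpace ℝ Y]
    (v g : Y) (r : ℝ) (hr : 0 ≤ r) (h : ⟪v, g⟫ < -r) :
    v ≠ 0 ∧
      ∀ α : ℝ,
        phi r v g ((⟪v, g⟫ + r) / ‖v‖ ^ 2) ≤ phi r v g α ∧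
        (phi r v g ((⟪v, g⟫ + r) / ‖v‖ ^ 2) = phi r v g α →
          α = (⟪v, g⟫ + r) / ‖v‖ ^ 2) := by
  have hv : v ≠ 0 := ne_zero_of_inner_lt_neg hr h
  have hnorm : 0 < ‖v‖ ^ 2 := by positivity
  set β := (⟪v, g⟫ + r) / ‖v‖ ^ 2
  have hβ : ‖v‖ ^ 2 * β = ⟪v, g⟫ + r := mul_div_cancel₀ _ hnorm.ne'
  have hβ_nonpos : β ≤ 0 := div_nonpos_of_nonpos_of_nonneg (by linarith) hnorm.le
  refine ⟨hv, fun α => ?_⟩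
  have hdiff := phi_sub_phi_eq hβ hβ_nonpos α
  have hsq : 0 ≤ ‖v‖ ^ 2 / 2 * (α - β) ^ 2 := by positivity
  have habs : 0 ≤ r * (|α| + α) := mul_nonneg hr (by linarith [neg_abs_le α])
  refine ⟨by linarith, fun heq => ?_⟩
  have hzero : ‖v‖ ^ 2 / 2 * (α - β) ^ 2 = 0 := by linarith
  have : (α - β) ^ 2 = 0 := by simpa [hnorm.ne'] using hzero
  exact sub_eq_zero.mp (pow_eq_zero_iff two_ne_zero |>.mp this)
end

section
/- Let Y be a real inner product space, let v, g ∈ Y with v ≠ 0, let r ≥ 0, and let α* be the unique global minimizer of φ(α) = r·|α| + (1/2)‖α·v − g‖². Then for every real c ≥ 0: |α*| > c if and only if |⟨v, g⟩| > r + c·‖v‖². -/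
/-!
On the line `α ↦ α • v` the objective is, up to the constant `‖g‖² / 2`, the scalar function
`r |α| + (n / 2) α² - t α` with `n = ‖v‖²` and `t = ⟪v, g⟫`. Its minimizer is `S_r(t) / n`, where
`S_r(t) = t - clamp(t, -r, r)` is soft thresholding: the residual `s = t - n α` lies in `[-r, r]`
and satisfies `s α = r |α|`, i.e. it is an `r`-subgradient of `|·|` at `α`, which is exactly the
optimality condition. Hence `|α*| = max (|t| - r) 0 / n`, and `|α*| > c ↔ |t| > r + c n`.
-/

open RealInnerProductSpace

lemma abs_penalized_quadratic_le_of_subgradient {n r t a : ℝ} (hn : 0 ≤ n)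
    (hs : |t - n * a| ≤ r) (hsa : (t - n * a) * a = r * |a|) (α : ℝ) :
    r * |a| + n / 2 * a ^ 2 - t * a ≤ r * |α| + n / 2 * α ^ 2 - t * α := by
  have hlin : (t - n * a) * α ≤ r * |α| :=
    calc (t - n * a) * α ≤ |t - n * a| * |α| := by rw [← abs_mul]; exact le_abs_self _
      _ ≤ r * |α| := mul_le_mul_of_nonneg_right hs (abs_nonneg α)
  nlinarith [mul_nonneg hn (sq_nonneg (α - a))]

noncomputable def softThreshold (r t : ℝ) : ℝ := t - max (-r) (min r t)

section softThreshold

variable {r : ℝ} (t : ℝ)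

lemma abs_sub_softThreshold_le (hr : 0 ≤ r) : |t - softThreshold r t| ≤ r := by
  rw [softThreshold, sub_sub_cancel, abs_le]
  constructor
  · exact le_max_left _ _
  · exact max_le (by linarith) (min_le_left _ _)

lemma sub_softThreshold_mul_self (hr : 0 ≤ r) :
    (t - softThreshold r t) * softThreshold r t = r * |softThreshold r t| := by
  simp only [softThreshold, sub_sub_cancel]
  rcases le_total t (-r) with ht | ht
  · rw [min_eq_right (by linarith), max_eq_left (by linarith), abs_of_nonpos (by linarith)]
    ring
  rcases le_total t r with ht' | ht'
  · rw [min_eq_right ht', max_eq_right ht, sub_self, abs_zero]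
    ring
  · rw [min_eq_left ht', max_eq_right (by linarith), abs_of_nonneg (by linarith)]

lemma abs_softThreshold (hr : 0 ≤ r) : |softThreshold r t| = max (|t| - r) 0 := by
  simp only [softThreshold]
  rcases le_total t (-r) with ht | ht
  · rw [min_eq_right (by linarith), max_eq_left (by linarith), abs_of_nonpos (by linarith),
      abs_of_nonpos (by linarith), max_eq_left (by linarith)]
    ring
  rcases le_total t r with ht' | ht'
  · rw [min_eq_right ht', max_eq_right ht, sub_self, abs_zero, max_eq_right]
    linarith [abs_le.mpr ⟨ht, ht'⟩]
  · rw [min_eq_left ht', max_eq_right (by linarith), abs_of_nonneg (by linarith),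
      abs_of_nonneg (by linarith), max_eq_left (by linarith)]

end softThreshold

section phi

variable {Y : Type*} [NormedAddCommGroup Y] [InnerProductSpace ℝ Y]

lemma phi_eq (r : ℝ) (v g : Y) (α : ℝ) :
    phi r v g α = r * |α| + ‖v‖ ^ 2 / 2 * α ^ 2 - ⟪v, g⟫ * α + ‖g‖ ^ 2 / 2 := by
  rw [phi, norm_sub_sq_real, real_inner_smul_left, norm_smul, mul_pow, Real.norm_eq_abs, sq_abs]
  ring

lemma phi_softThreshold_le {r : ℝ} (hr : 0 ≤ r) {v : Y} (hv : v ≠ 0) (g : Y) (α : ℝ) :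
    phi r v g (softThreshold r ⟪v, g⟫ / ‖v‖ ^ 2) ≤ phi r v g α := by
  have hn : ‖v‖ ^ 2 ≠ 0 := by positivity
  have hna : ‖v‖ ^ 2 * (softThreshold r ⟪v, g⟫ / ‖v‖ ^ 2) = softThreshold r ⟪v, g⟫ :=
    mul_div_cancel₀ _ hn
  rw [phi_eq, phi_eq, add_le_add_iff_right]
  refine abs_penalized_quadratic_le_of_subgradient (by positivity) ?_ ?_ α
  · rw [hna]
    exact abs_sub_softThreshold_le _ hr
  · rw [hna, abs_div, abs_of_nonneg (by positivity : (0 : ℝ) ≤ ‖v‖ ^ 2), mul_div_assoc',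
      mul_div_assoc', sub_softThreshold_mul_self _ hr]

end phi

theorem stmt4_general {Y : Type*} [NormedAddCommGroup Y] [InnerProductSpace ℝ Y]
    (v g : Y) (r : ℝ) (hv : v ≠ 0) (hr : 0 ≤ r) (αstar : ℝ)
    (huniq : ∀ β : ℝ, (∀ α : ℝ, phi r v g β ≤ phi r v g α) → β = αstar) :
    ∀ c : ℝ, 0 ≤ c → (c < |αstar| ↔ r + c * ‖v‖ ^ 2 < |⟪v, g⟫|) := by
  intro c hc
  have hn : 0 < ‖v‖ ^ 2 := by positivity
  obtain rfl := huniq _ (phi_softThreshold_le hr hv g)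
  rw [abs_div, abs_of_pos hn, abs_softThreshold _ hr, lt_div_iff₀ hn, lt_max_iff,
    or_iff_left (mul_nonneg hc hn.le).not_gt, lt_sub_iff_add_lt']

/-- If `v ≠ 0`, `r ≥ 0` and `α*` is the unique global minimizer of `φ`, then for every
`c ≥ 0`: `|α*| > c ↔ |⟪v, g⟫| > r + c·‖v‖²`. -/
theorem stmt4 {Y : Type*} [NormedAddCommGroup Y] [InnerProductSpace ℝ Y]
    (v g : Y) (r : ℝ) (hv : v ≠ 0) (hr : 0 ≤ r) (αstar : ℝ)
    (hmin : ∀ α : ℝ, phi r v g αstar ≤ phi r v g α)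
    (huniq : ∀ β : ℝ, (∀ α : ℝ, phi r v g β ≤ phi r v g α) → β = αstar) :
    ∀ c : ℝ, 0 ≤ c → (c < |αstar| ↔ r + c * ‖v‖ ^ 2 < |⟪v, g⟫|) :=
  stmt4_general v g r hv hr αstar huniq
end

section
/- Let S be a set and let f : S → ℝ be a nonnegative function. Let 0 = t₀ < t₁ < ⋯ < t_m be real numbers, set δᵢ = tᵢ − t_{i−1}, and choose τᵢ ∈ [t_{i−1}, tᵢ] for i = 1, …, m. Define f₁(x) = Σ_{i=1}^m δᵢ · 1_{{f ≥ τᵢ}}(x) (where 1_{{f ≥ τ}} is the indicator of the set {x : f(x) ≥ τ}) and f₂(x) = max{0, f(x) − t_m}. Then for every x ∈ S, |f(x) − f₁(x) − f₂(x)| ≤ max_{1 ≤ i ≤ m} δᵢ; in particular the supremum norm satisfies ‖f − f₁ − f₂‖_∞ ≤ max_{1 ≤ i ≤ m} δᵢ. -/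
/-!
Induct on the number of layers, carrying the extra invariant that `f₁ + f₂ = f` wherever
`f ≥ t_n`. Adding layer `n + 1` changes nothing where `f < t_n`; where `f ≥ t_n` the new error is
`(f - t_n) - δ_{n+1} · 1_{f ≥ τ_{n+1}}` if `f < t_{n+1}`, of absolute value at most `δ_{n+1}`,
and zero otherwise.
-/

open Finset

/-- The value `f₁ x + f₂ x` of the layer-cake approximation, as a function of `v = f x`. -/
noncomputable def layerCakeApprox (t τ : ℕ → ℝ) (n : ℕ) (v : ℝ) : ℝ :=
  ∑ i ∈ Icc 1 n, (t i - t (i - 1)) * Set.indicator {y | τ i ≤ y} (fun _ => (1 : ℝ)) v +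
    max 0 (v - t n)

lemma layerCakeApprox_succ (t τ : ℕ → ℝ) (n : ℕ) (v : ℝ) :
    layerCakeApprox t τ (n + 1) v = layerCakeApprox t τ n v - max 0 (v - t n) +
      (if τ (n + 1) ≤ v then t (n + 1) - t n else 0) + max 0 (v - t (n + 1)) := by
  simp only [layerCakeApprox, sum_Icc_succ_top (Nat.le_add_left 1 n), Nat.add_sub_cancel,
    Set.indicator_apply, Set.mem_ofPred_eq, mul_ite, mul_one, mul_zero]
  ring

theorem layerCakeApprox_eq_of_le_and_abs_sub_le {t τ : ℕ → ℝ} {n : ℕ} {D : ℝ} (ht0 : t 0 = 0)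
    (hmono : ∀ i < n, t i ≤ t (i + 1))
    (hτ : ∀ i ∈ Icc 1 n, τ i ∈ Set.Icc (t (i - 1)) (t i))
    (hD : ∀ i ∈ Icc 1 n, t i - t (i - 1) ≤ D) (hD0 : 0 ≤ D) {v : ℝ} (hv : 0 ≤ v) :
    (t n ≤ v → layerCakeApprox t τ n v = v) ∧ |v - layerCakeApprox t τ n v| ≤ D := by
  induction n with
  | zero =>
    simp [layerCakeApprox, ht0, max_eq_right hv, hD0]
  | succ n ih =>
    obtain ⟨ih_exact, ih_bound⟩ := ih (fun i hi => hmono i (by omega))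
      (fun i hi => hτ i (Icc_subset_Icc_right n.le_succ hi))
      (fun i hi => hD i (Icc_subset_Icc_right n.le_succ hi))
    have hstep : t n ≤ t (n + 1) := hmono n n.lt_succ_self
    obtain ⟨hτ_lo, hτ_hi⟩ := hτ (n + 1) (mem_Icc.2 ⟨le_add_self, le_rfl⟩)
    have hδ : t (n + 1) - t n ≤ D := hD (n + 1) (mem_Icc.2 ⟨le_add_self, le_rfl⟩)
    rw [layerCakeApprox_succ]
    simp only [Nat.add_sub_cancel] at hτ_lo
    rcases lt_or_ge v (t n) with hvn | hvn
    · rw [if_neg (by linarith), max_eq_left (by linarith), max_eq_left (by linarith)]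
      exact ⟨fun h => by linarith, by simpa using ih_bound⟩
    rw [ih_exact hvn, max_eq_right (by linarith)]
    rcases le_or_gt (t (n + 1)) v with hvn' | hvn'
    · rw [if_pos (by linarith), max_eq_right (by linarith)]
      exact ⟨fun _ => by ring, by simpa using hD0⟩
    · refine ⟨fun h => absurd h (not_le.2 hvn'), ?_⟩
      rw [max_eq_left (by linarith), abs_le]
      split_ifs <;> constructor <;> linarith

/-- Layer-cake step-function approximation: for a nonnegative `f : S → ℝ`, a partition
`0 = t₀ < t₁ < ⋯ < t_m` with `δᵢ = tᵢ − t_{i−1}`, sample points `τᵢ ∈ [t_{i−1}, tᵢ]`,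
`f₁ = Σᵢ δᵢ · 1_{{f ≥ τᵢ}}` and `f₂ = max(0, f − t_m)`, one has
`|f x − f₁ x − f₂ x| ≤ maxᵢ δᵢ` for all `x`, and hence `‖f − f₁ − f₂‖_∞ ≤ maxᵢ δᵢ`. -/
theorem stmt8 {S : Type*} (f : S → ℝ) (hf : ∀ x, 0 ≤ f x)
    (m : ℕ) (hm : 1 ≤ m) (t : ℕ → ℝ) (ht0 : t 0 = 0)
    (hmono : ∀ i, i < m → t i < t (i + 1))
    (τ : ℕ → ℝ) (hτ : ∀ i, 1 ≤ i → i ≤ m → τ i ∈ Set.Icc (t (i - 1)) (t i)) :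
    (∀ x : S,
      |f x - (∑ i ∈ Finset.Icc 1 m,
          (t i - t (i - 1)) * Set.indicator {y | τ i ≤ f y} (fun _ => (1 : ℝ)) x) -
        max 0 (f x - t m)| ≤
      (Finset.Icc 1 m).sup' (Finset.nonempty_Icc.mpr hm) (fun i => t i - t (i - 1))) ∧
    (⨆ x : S,
      |f x - (∑ i ∈ Finset.Icc 1 m,
          (t i - t (i - 1)) * Set.indicator {y | τ i ≤ f y} (fun _ => (1 : ℝ)) x) -
        max 0 (f x - t m)|) ≤
      (Finset.Icc 1 m).sup' (Finset.nonempty_Icc.mpr hm) (fun i => t i - t (i - 1)) := by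
  set D := (Finset.Icc 1 m).sup' (Finset.nonempty_Icc.mpr hm) (fun i => t i - t (i - 1))
  have hD : ∀ i ∈ Icc 1 m, t i - t (i - 1) ≤ D := fun i hi => le_sup' (fun i => t i - t (i - 1)) hi
  have hD0 : 0 ≤ D := (sub_nonneg.2 (hmono 0 hm).le).trans (hD 1 (mem_Icc.2 ⟨le_rfl, hm⟩))
  have key : ∀ x, |f x - (∑ i ∈ Icc 1 m,
      (t i - t (i - 1)) * Set.indicator {y | τ i ≤ f y} (fun _ => (1 : ℝ)) x) -
        max 0 (f x - t m)| ≤ D := fun x => by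
    rw [sub_sub]
    exact (layerCakeApprox_eq_of_le_and_abs_sub_le ht0 (fun i hi => (hmono i hi).le)
      (fun i hi => hτ i (mem_Icc.1 hi).1 (mem_Icc.1 hi).2) hD hD0 (hf x)).2
  exact ⟨key, Real.iSup_le key hD0⟩
end
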